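/- Let X, Y ⊆ ω and let A be a pca with a Y-effectively pca-valued partial numbering γ that has Y-c.e. inequivalence. If there exists an embedding of pcas f : K1^X ↪ A, then X is Turing reducible to Y. -/

import Mathlib

namespace PCAEmb

/-! ### Oracle computability -/

/-- Codes for partial functions computable relative to an oracle. -/
inductive OCode : Type
  | zero : OCode
  | succ : OCode
  | left : OCode
  | right : OCode
  | oracle : OCode
  | pair : OCode → OCode → OCode
  | comp : OCode → OCode → OCode
  | prec : OCode → OCode → OCode
  | rfind' : OCode → OCode

/-- Evaluation of an oracle code, relative to a (partial) oracle `O`. -/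
def evalo (O : ℕ →. ℕ) : OCode → ℕ →. ℕ
  | .zero => pure 0
  | .succ => Nat.succ
  | .left => ↑fun n : ℕ => n.unpair.1
  | .right => ↑fun n : ℕ => n.unpair.2
  | .oracle => O
  | .pair cf cg => fun n => Nat.pair <$> evalo O cf n <*> evalo O cg n
  | .comp cf cg => fun n => evalo O cg n >>= evalo O cf
  | .prec cf cg =>
      Nat.unpaired fun a n =>
        n.rec (evalo O cf a) fun y IH => do
          let i ← IH
          evalo O cg (Nat.pair a (Nat.pair y i))
  | .rfind' cf =>
      Nat.unpaired fun a m =>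
        (Nat.rfind fun n => (fun x => x = 0) <$> evalo O cf (Nat.pair a (n + m))).map (· + m)

/-- The standard numbering of oracle codes. -/
def OCode.ofNat : ℕ → OCode
  | 0 => .zero
  | 1 => .succ
  | 2 => .left
  | 3 => .right
  | 4 => .oracle
  | n + 5 =>
    match n % 4 with
    | 0 => .pair (OCode.ofNat (n / 4).unpair.1) (OCode.ofNat (n / 4).unpair.2)
    | 1 => .comp (OCode.ofNat (n / 4).unpair.1) (OCode.ofNat (n / 4).unpair.2)
    | 2 => .prec (OCode.ofNat (n / 4).unpair.1) (OCode.ofNat (n / 4).unpair.2)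
    | _ => .rfind' (OCode.ofNat (n / 4).unpair.1)
  decreasing_by
    all_goals
      have h1 := Nat.unpair_left_le (n / 4)
      have h2 := Nat.unpair_right_le (n / 4)
      have h3 := Nat.div_le_self n 4
      omega

/-- The `e`-th Turing functional with oracle `O` : `Φ_e^O`. -/
def phi (O : ℕ →. ℕ) (e : ℕ) : ℕ →. ℕ := evalo O (OCode.ofNat e)

/-- The characteristic function of a set of naturals, as a (total) partial function. -/
noncomputable def chi (X : Set ℕ) : ℕ →. ℕ :=
  fun n => Part.some (X.indicator (fun _ => 1) n)

/-- `ψ` is partial computable relative to the oracle `O`. -/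
def RecursiveIn (O : ℕ →. ℕ) (ψ : ℕ →. ℕ) : Prop := ∃ c : OCode, evalo O c = ψ

/-- Turing reducibility of sets of naturals. -/
def TuringLE (X Y : Set ℕ) : Prop := RecursiveIn (chi Y) (chi X)

/-- A total function `d : ℕ → ℕ` is `Y`-computable. -/
def ComputableIn (Y : Set ℕ) (d : ℕ → ℕ) : Prop :=
  RecursiveIn (chi Y) (fun n => Part.some (d n))

/-- A binary relation on `ℕ` is `Y`-c.e. -/
def CEIn (Y : Set ℕ) (R : ℕ → ℕ → Prop) : Prop :=
  ∃ c : OCode, ∀ n m, R n m ↔ (evalo (chi Y) c (Nat.pair n m)).Dom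

/-- A set `W ⊆ ℕ` is `Y`-c.e. -/
def CE1In (Y : Set ℕ) (W : Set ℕ) : Prop :=
  ∃ c : OCode, ∀ n, n ∈ W ↔ (evalo (chi Y) c n).Dom

/-- The canonical finite set `D_u` with code `u` (binary coding). -/
def Du (u : ℕ) : Set ℕ := {k | u.testBit k}

/-- Enumeration reducibility: `Z ≤ₑ Y`. -/
def EnumLE (Z Y : Set ℕ) : Prop :=
  ∃ W : Set ℕ, CE1In ∅ W ∧ ∀ x, x ∈ Z ↔ ∃ u, Nat.pair x u ∈ W ∧ Du u ⊆ Y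

/-- The Turing jump `X'` of a set `X`. -/
def jump (X : Set ℕ) : Set ℕ := {e | (phi (chi X) e e).Dom}

/-- The halting set `K = {e : φ_e(e)↓}`. -/
def Khalt : Set ℕ := jump ∅

/-! ### Partial combinatory algebras -/

/-- `k·a·b` as a partial element. -/
def app2 {α : Type*} (app : α → α → Part α) (a b c : α) : Part α :=
  (app a b).bind fun x => app x c

/-- `s·a·b·c` as a partial element. -/
def app3 {α : Type*} (app : α → α → Part α) (a b c d : α) : Part α :=
  (app2 app a b c).bind fun x => app x d

/-- A partial applicative structure is a pca if it has (distinct) combinators `s` and `k`. -/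
def IsPCA {α : Type*} (app : α → α → Part α) : Prop :=
  ∃ s k : α, s ≠ k ∧
    (∀ a b : α, app2 app k a b = Part.some a) ∧
    (∀ a b : α, (app2 app s a b).Dom) ∧
    (∀ a b c : α,
      app3 app s a b c = (app a c).bind fun x => (app b c).bind fun y => app x y)

/-- An embedding of partial combinatory algebras: an injection that preserves
(defined) application. -/
def IsPCAEmbedding {α β : Type*} (appA : α → α → Part α) (appB : β → β → Part β)
    (f : α → β) : Prop :=
  Function.Injective f ∧ ∀ a a' c : α, c ∈ appA a a' → f c ∈ appB (f a) (f a')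

/-! ### Partial numberings -/

/-- `γ : ℕ ⇀ α` is a partial numbering (i.e. surjective). -/
def IsNumbering {α : Type*} (γ : ℕ →. α) : Prop := ∀ a : α, ∃ n, a ∈ γ n

/-- `d` is an `(a⊥, a⊤)`-decider for `X` with respect to `γ`. -/
def IsDecider {α : Type*} (γ : ℕ →. α) (abot atop : α) (X : Set ℕ) (d : ℕ → ℕ) : Prop :=
  ∀ n, (n ∉ X → γ (d n) = Part.some abot) ∧ (n ∈ X → γ (d n) = Part.some atop)

/-- `γ` has `Y`-c.e. inequivalence. -/
def CEInequiv {α : Type*} (Y : Set ℕ) (γ : ℕ →. α) : Prop :=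
  ∃ R : ℕ → ℕ → Prop, CEIn Y R ∧
    ∀ n m, (γ n).Dom → (γ m).Dom → (R n m ↔ γ n ≠ γ m)

/-- `γ` is a `Y`-effectively pca-valued partial numbering: the application is
represented on codes by a partial `Y`-computable function `ψ`. -/
def EffValued {α : Type*} (Y : Set ℕ) (app : α → α → Part α) (γ : ℕ →. α) : Prop :=
  ∃ ψ : ℕ →. ℕ, RecursiveIn (chi Y) ψ ∧
    ∀ (n m : ℕ) (a b c : α), a ∈ γ n → b ∈ γ m → c ∈ app a b →
      ∃ j, j ∈ ψ (Nat.pair n m) ∧ c ∈ γ j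

/-- `γ` is a strongly `Y`-effectively pca-valued partial numbering. -/
def StrongEffValued {α : Type*} (Y : Set ℕ) (app : α → α → Part α) (γ : ℕ →. α) : Prop :=
  ∃ ψ : ℕ →. ℕ, RecursiveIn (chi Y) ψ ∧
    (∀ (n m : ℕ) (a b c : α), a ∈ γ n → b ∈ γ m → c ∈ app a b →
      ∃ j, j ∈ ψ (Nat.pair n m) ∧ c ∈ γ j) ∧
    (∀ (n m k l : ℕ) (a b a' b' c : α), a ∈ γ n → b ∈ γ m → a' ∈ γ k → b' ∈ γ l →
      c ∈ app a b → c ∈ app a' b' → ψ (Nat.pair n m) = ψ (Nat.pair k l))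

/-! ### The models -/

/-- Kleene's first model relativized to `X`: application `n · m = Φ_n^X(m)`. -/
noncomputable def k1App (X : Set ℕ) : ℕ → ℕ → Part ℕ := fun n m => phi (chi X) n m

/-- A total function as a partial function. -/
def toPFun (g : ℕ → ℕ) : ℕ →. ℕ := fun n => Part.some (g n)

/-- Join `f ⊕ g` of two partial functions. -/
def pjoin (f g : ℕ →. ℕ) : ℕ →. ℕ := fun n =>
  if n % 2 = 0 then f (n / 2) else g (n / 2)

/-- The totalization of a partial function, as a partial element of `ℕ → ℕ`:
defined iff `ψ` is total. -/
def partToTotal (ψ : ℕ →. ℕ) : Part (ℕ → ℕ) :=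
  ⟨∀ n, (ψ n).Dom, fun H n => (ψ n).get (H n)⟩

/-- Application in Kleene's second model `K₂`: `g · h = Φ^{g⊕h}_{g 0}`,
defined iff this function is total. -/
def k2App (g h : ℕ → ℕ) : Part (ℕ → ℕ) :=
  partToTotal (phi (pjoin (toPFun g) (toPFun h)) (g 0))

/-- Application in van Oosten's sequential model `B`: `θ · ρ = Φ^{θ⊕ρ}_{θ 0}`
(always defined, as a partial function). -/
def bApp (θ ρ : ℕ →. ℕ) : Part (ℕ →. ℕ) :=
  Part.some (fun n => (θ 0).bind fun e => phi (pjoin θ ρ) e n)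

/-- Restriction of a partial applicative structure to a subset. -/
def subApp {α : Type*} (app : α → α → Part α) (P : α → Prop)
    (a b : Subtype P) : Part (Subtype P) :=
  (app a.1 b.1).bind fun c => Part.assert (P c) fun h => Part.some ⟨c, h⟩

/-- Carrier of `K₂^X` : the total `X`-computable functions. -/
def K2el (X : Set ℕ) : Type := {g : ℕ → ℕ // RecursiveIn (chi X) (toPFun g)}

/-- Application in `K₂^X`. -/
def k2XApp (X : Set ℕ) : K2el X → K2el X → Part (K2el X) :=
  subApp k2App _

/-- Carrier of `B^X` : the partial `X`-computable functions. -/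
def Bel (X : Set ℕ) : Type := {θ : ℕ →. ℕ // RecursiveIn (chi X) θ}

/-- Application in `B^X`. -/
def bXApp (X : Set ℕ) : Bel X → Bel X → Part (Bel X) :=
  subApp bApp _

/-- Application in Scott's graph model `G`. -/
def gApp (A B : Set ℕ) : Part (Set ℕ) :=
  Part.some {n | ∃ u, Nat.pair n u ∈ A ∧ Du u ⊆ B}

/-- Carrier of `G^Z` : the sets enumeration-reducible to `Z`. -/
def Gel (Z : Set ℕ) : Type := {A : Set ℕ // EnumLE A Z}

/-- Application in `G^Z`. -/
def gXApp (Z : Set ℕ) : Gel Z → Gel Z → Part (Gel Z) :=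
  subApp gApp _

/-- `X ⊕ X̄ = {2n : n ∈ X} ∪ {2n+1 : n ∉ X}`. -/
def joinCompl (X : Set ℕ) : Set ℕ :=
  {k | ∃ n, (k = 2 * n ∧ n ∈ X) ∨ (k = 2 * n + 1 ∧ n ∉ X)}

/-! ### The λ-calculus -/

/-- Untyped λ-terms (de Bruijn representation). -/
inductive Lam : Type
  | var : ℕ → Lam
  | app : Lam → Lam → Lam
  | abs : Lam → Lam

/-- Lift (shift up) the free variables `≥ d` of a term. -/
def Lam.lift : Lam → ℕ → Lam
  | .var n, d => if n < d then .var n else .var (n + 1)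
  | .app M N, d => .app (M.lift d) (N.lift d)
  | .abs M, d => .abs (M.lift (d + 1))

/-- Substitution `M[k := N]` (de Bruijn). -/
def Lam.subst : Lam → ℕ → Lam → Lam
  | .var n, k, N => if n = k then N else if k < n then .var (n - 1) else .var n
  | .app M M', k, N => .app (M.subst k N) (M'.subst k N)
  | .abs M, k, N => .abs (M.subst (k + 1) (N.lift 0))

/-- β-equivalence of λ-terms. -/
inductive BetaEq : Lam → Lam → Prop
  | beta (M N : Lam) : BetaEq (.app (.abs M) N) (M.subst 0 N)
  | refl (M : Lam) : BetaEq M M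
  | symm {M N : Lam} : BetaEq M N → BetaEq N M
  | trans {M N P : Lam} : BetaEq M N → BetaEq N P → BetaEq M P
  | appCongr {M M' N N' : Lam} :
      BetaEq M M' → BetaEq N N' → BetaEq (.app M N) (.app M' N')
  | absCongr {M M' : Lam} : BetaEq M M' → BetaEq (.abs M) (.abs M')

/-- βη-equivalence of λ-terms. -/
inductive BetaEtaEq : Lam → Lam → Prop
  | beta (M N : Lam) : BetaEtaEq (.app (.abs M) N) (M.subst 0 N)
  | eta (M : Lam) : BetaEtaEq (.abs (.app (M.lift 0) (.var 0))) M
  | refl (M : Lam) : BetaEtaEq M M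
  | symm {M N : Lam} : BetaEtaEq M N → BetaEtaEq N M
  | trans {M N P : Lam} : BetaEtaEq M N → BetaEtaEq N P → BetaEtaEq M P
  | appCongr {M M' N N' : Lam} :
      BetaEtaEq M M' → BetaEtaEq N N' → BetaEtaEq (.app M N) (.app M' N')
  | absCongr {M M' : Lam} : BetaEtaEq M M' → BetaEtaEq (.abs M) (.abs M')

def lamBetaSetoid : Setoid Lam := ⟨BetaEq, ⟨BetaEq.refl, BetaEq.symm, BetaEq.trans⟩⟩

def lamBetaEtaSetoid : Setoid Lam :=
  ⟨BetaEtaEq, ⟨BetaEtaEq.refl, BetaEtaEq.symm, BetaEtaEq.trans⟩⟩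

/-- The pca `λ` of λ-terms modulo β-equivalence. -/
def LamBeta : Type := Quotient lamBetaSetoid

/-- The pca `λη` of λ-terms modulo βη-equivalence. -/
def LamBetaEta : Type := Quotient lamBetaEtaSetoid

/-- Application in `λ` (total). -/
def lamBetaApp : LamBeta → LamBeta → Part LamBeta := fun a b =>
  Part.some (Quotient.map₂ Lam.app (fun _ _ h1 _ _ h2 => BetaEq.appCongr h1 h2) a b)

/-- Application in `λη` (total). -/
def lamBetaEtaApp : LamBetaEta → LamBetaEta → Part LamBetaEta := fun a b =>
  Part.some (Quotient.map₂ Lam.app (fun _ _ h1 _ _ h2 => BetaEtaEq.appCongr h1 h2) a b)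


open Nat.Partrec (Code)
open Nat.Partrec.Code

@[simp] theorem some_bind_pfun (a : ℕ) (f : ℕ →. ℕ) : Part.some a >>= f = f a :=
  Part.bind_some a f

/-! ### Translation between OCode and Mathlib codes -/

/-- Encoding of `OCode` into ℕ, inverse to `OCode.ofNat`. -/
def OCode.toNat : OCode → ℕ
  | .zero => 0
  | .succ => 1
  | .left => 2
  | .right => 3
  | .oracle => 4
  | .pair a b => 4 * Nat.pair a.toNat b.toNat + 5
  | .comp a b => 4 * Nat.pair a.toNat b.toNat + 6
  | .prec a b => 4 * Nat.pair a.toNat b.toNat + 7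
  | .rfind' a => 4 * Nat.pair a.toNat (0) + 8

theorem OCode.ofNat_toNat : ∀ c : OCode, OCode.ofNat c.toNat = c := by
  intro c
  induction c with
  | zero => simp [OCode.ofNat, OCode.toNat]
  | succ => simp [OCode.ofNat, OCode.toNat]
  | left => simp [OCode.ofNat, OCode.toNat]
  | right => simp [OCode.ofNat, OCode.toNat]
  | oracle => simp [OCode.ofNat, OCode.toNat]
  | pair a b iha ihb =>
      rw [show OCode.toNat (.pair a b) = (4 * Nat.pair a.toNat b.toNat + 0) + 5 by
        simp [OCode.toNat]]
      simp [OCode.ofNat, Nat.mul_add_mod, Nat.mul_add_div, iha, ihb]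
  | comp a b iha ihb =>
      rw [show OCode.toNat (.comp a b) = (4 * Nat.pair a.toNat b.toNat + 1) + 5 by
        simp [OCode.toNat]]
      simp [OCode.ofNat, Nat.mul_add_mod, Nat.mul_add_div, iha, ihb]
  | prec a b iha ihb =>
      rw [show OCode.toNat (.prec a b) = (4 * Nat.pair a.toNat b.toNat + 2) + 5 by
        simp [OCode.toNat]]
      simp [OCode.ofNat, Nat.mul_add_mod, Nat.mul_add_div, iha, ihb]
  | rfind' a iha =>
      rw [show OCode.toNat (.rfind' a) = (4 * Nat.pair a.toNat 0 + 3) + 5 by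
        simp [OCode.toNat]]
      simp [OCode.ofNat, Nat.mul_add_mod, Nat.mul_add_div, iha]

/-- An oracle-free Mathlib code, viewed as an `OCode`. -/
def ofCode : Code → OCode
  | .zero => .zero
  | .succ => .succ
  | .left => .left
  | .right => .right
  | .pair a b => .pair (ofCode a) (ofCode b)
  | .comp a b => .comp (ofCode a) (ofCode b)
  | .prec a b => .prec (ofCode a) (ofCode b)
  | .rfind' a => .rfind' (ofCode a)

theorem evalo_ofCode (O : ℕ →. ℕ) : ∀ c : Code, evalo O (ofCode c) = c.eval := by
  intro c
  induction c with
  | zero => rfl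
  | succ => rfl
  | left => rfl
  | right => rfl
  | pair a b iha ihb => simp [ofCode, evalo, eval, iha, ihb]; rfl
  | comp a b iha ihb => simp [ofCode, evalo, eval, iha, ihb]; rfl
  | prec a b iha ihb => simp [ofCode, evalo, eval, iha, ihb]; rfl
  | rfind' a iha => simp [ofCode, evalo, eval, iha]; rfl

/-- Plain partial computable functions are computable in any oracle. -/
theorem RecursiveIn.of_partrec {O : ℕ →. ℕ} {f : ℕ →. ℕ} (hf : Nat.Partrec f) :
    RecursiveIn O f := by
  obtain ⟨c, hc⟩ := exists_code.1 hf
  exact ⟨ofCode c, by rw [evalo_ofCode, hc]⟩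

/-- An `OCode` with the oracle leaf replaced by a given Mathlib code. -/
def toCode : OCode → Code → Code
  | .zero, _ => .zero
  | .succ, _ => .succ
  | .left, _ => .left
  | .right, _ => .right
  | .oracle, co => co
  | .pair a b, co => .pair (toCode a co) (toCode b co)
  | .comp a b, co => .comp (toCode a co) (toCode b co)
  | .prec a b, co => .prec (toCode a co) (toCode b co)
  | .rfind' a, co => .rfind' (toCode a co)

theorem eval_toCode (co : Code) : ∀ c : OCode, (toCode c co).eval = evalo co.eval c := by
  intro c
  induction c with
  | zero => rfl
  | succ => rfl
  | left => rfl
  | right => rfl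
  | oracle => rfl
  | pair a b iha ihb => simp [toCode, evalo, eval, iha, ihb]; rfl
  | comp a b iha ihb => simp [toCode, evalo, eval, iha, ihb]; rfl
  | prec a b iha ihb => simp [toCode, evalo, eval, iha, ihb]; rfl
  | rfind' a iha => simp [toCode, evalo, eval, iha]; rfl


/-! ### Closure properties of `RecursiveIn` -/

theorem RecursiveIn.comp {O f g : ℕ →. ℕ} (hf : RecursiveIn O f) (hg : RecursiveIn O g) :
    RecursiveIn O fun n => g n >>= f := by
  obtain ⟨cf, rfl⟩ := hf; obtain ⟨cg, rfl⟩ := hg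
  exact ⟨.comp cf cg, rfl⟩

theorem RecursiveIn.pair {O f g : ℕ →. ℕ} (hf : RecursiveIn O f) (hg : RecursiveIn O g) :
    RecursiveIn O fun n => Nat.pair <$> f n <*> g n := by
  obtain ⟨cf, rfl⟩ := hf; obtain ⟨cg, rfl⟩ := hg
  exact ⟨.pair cf cg, rfl⟩

theorem RecursiveIn.oracle {O : ℕ →. ℕ} : RecursiveIn O O := ⟨.oracle, rfl⟩

theorem RecursiveIn.of_eq {O f g : ℕ →. ℕ} (hf : RecursiveIn O f) (h : ∀ n, f n = g n) :
    RecursiveIn O g := by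
  obtain ⟨c, rfl⟩ := hf; exact ⟨c, funext h⟩

theorem RecursiveIn.of_computable {O : ℕ →. ℕ} {f : ℕ → ℕ} (hf : Computable f) :
    RecursiveIn O fun n => Part.some (f n) :=
  RecursiveIn.of_partrec (Nat.Partrec.of_eq (Partrec.nat_iff.1 hf.partrec) fun n => rfl)

/-- Composition with a total computable pre-processing function. -/
theorem RecursiveIn.comp_computable {O f : ℕ →. ℕ} {g : ℕ → ℕ} (hf : RecursiveIn O f)
    (hg : Computable g) : RecursiveIn O fun n => f (g n) :=
  (hf.comp (RecursiveIn.of_computable hg)).of_eq fun n => Part.bind_some _ _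

/-- Composition with a total computable post-processing function. -/
theorem RecursiveIn.map_computable {O f : ℕ →. ℕ} {g : ℕ → ℕ} (hf : RecursiveIn O f)
    (hg : Computable g) : RecursiveIn O fun n => (f n).map g :=
  ((RecursiveIn.of_computable hg).comp hf).of_eq fun n =>
    Part.ext fun b => by simp [Part.mem_bind_iff, Part.mem_map_iff, eq_comm]

/-! ### Oracle monotonicity -/

theorem evalo_mono {O₁ O₂ : ℕ →. ℕ} (h : ∀ x v, v ∈ O₁ x → v ∈ O₂ x) :
    ∀ (c : OCode) (n v : ℕ), v ∈ evalo O₁ c n → v ∈ evalo O₂ c n := by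
  intro c
  induction c with
  | zero => exact fun n v hv => hv
  | succ => exact fun n v hv => hv
  | left => exact fun n v hv => hv
  | right => exact fun n v hv => hv
  | oracle => exact fun n v hv => h n v hv
  | pair cf cg ihf ihg =>
      intro n v hv
      simp only [evalo, Seq.seq, Part.bind_eq_bind, Part.map_eq_map,
        Part.mem_bind_iff, Part.mem_map_iff] at hv ⊢
      obtain ⟨pf, ⟨a, ha, rfl⟩, b, hb, rfl⟩ := hv
      exact ⟨_, ⟨a, ihf _ _ ha, rfl⟩, b, ihg _ _ hb, rfl⟩
  | comp cf cg ihf ihg =>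
      intro n v hv
      simp only [evalo] at hv ⊢
      obtain ⟨a, ha, hb⟩ := Part.mem_bind_iff.1 hv
      exact Part.mem_bind_iff.2 ⟨a, ihg _ _ ha, ihf _ _ hb⟩
  | prec cf cg ihf ihg =>
      intro n v
      simp only [evalo, Nat.unpaired]
      generalize n.unpair.1 = a
      generalize n.unpair.2 = m
      induction m generalizing v with
      | zero => exact fun hv => ihf _ _ hv
      | succ y ih =>
          intro hv
          simp only [Part.bind_eq_bind, Part.mem_bind_iff] at hv ⊢
          obtain ⟨i, hi, hv⟩ := hv
          exact ⟨i, ih _ hi, ihg _ _ hv⟩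
  | rfind' cf ihf =>
      intro n v hv
      simp only [evalo, Nat.unpaired, Part.map_eq_map, Part.mem_map_iff] at hv ⊢
      obtain ⟨m, hm, rfl⟩ := hv
      refine ⟨m, ?_, rfl⟩
      obtain ⟨h0, hlt⟩ := Nat.mem_rfind.1 hm
      refine Nat.mem_rfind.2 ⟨?_, ?_⟩
      · simp only [Part.map_eq_map, Part.mem_map_iff] at h0 ⊢
        obtain ⟨a, ha, ha'⟩ := h0
        exact ⟨a, ihf _ _ ha, ha'⟩
      · intro j hj
        have hb := hlt hj
        simp only [Part.map_eq_map, Part.mem_map_iff] at hb ⊢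
        obtain ⟨a, ha, ha'⟩ := hb
        exact ⟨a, ihf _ _ ha, ha'⟩

/-! ### Compactness of oracle computations -/

section Compact

variable {O : ℕ →. ℕ} {Ob : ℕ → ℕ →. ℕ}
  (hmono : ∀ b x v, v ∈ Ob b x → v ∈ Ob (b + 1) x)
  (hcov : ∀ x v, v ∈ O x → ∃ b, v ∈ Ob b x)

include hmono

theorem Ob_le {b b' : ℕ} (hbb : b ≤ b') : ∀ x v, v ∈ Ob b x → v ∈ Ob b' x := by
  induction hbb with
  | refl => exact fun _ _ hv => hv
  | step _ ih => exact fun x v hv => hmono _ _ _ (ih x v hv)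

theorem evalo_Ob_le {b b' : ℕ} (hbb : b ≤ b') (c : OCode) (n v : ℕ)
    (hv : v ∈ evalo (Ob b) c n) : v ∈ evalo (Ob b') c n :=
  evalo_mono (Ob_le hmono hbb) c n v hv

include hcov

theorem evalo_compact : ∀ (c : OCode) (n v : ℕ), v ∈ evalo O c n → ∃ b, v ∈ evalo (Ob b) c n := by
  intro c
  induction c with
  | zero => exact fun n v hv => ⟨0, hv⟩
  | succ => exact fun n v hv => ⟨0, hv⟩
  | left => exact fun n v hv => ⟨0, hv⟩
  | right => exact fun n v hv => ⟨0, hv⟩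
  | oracle => exact fun n v hv => hcov n v hv
  | pair cf cg ihf ihg =>
      intro n v hv
      simp only [evalo, Seq.seq, Part.bind_eq_bind, Part.map_eq_map,
        Part.mem_bind_iff, Part.mem_map_iff] at hv ⊢
      obtain ⟨pf, ⟨a, ha, rfl⟩, b, hb, rfl⟩ := hv
      obtain ⟨b₁, h₁⟩ := ihf _ _ ha
      obtain ⟨b₂, h₂⟩ := ihg _ _ hb
      exact ⟨max b₁ b₂, _, ⟨a, evalo_Ob_le hmono (le_max_left _ _) _ _ _ h₁, rfl⟩,
        b, evalo_Ob_le hmono (le_max_right _ _) _ _ _ h₂, rfl⟩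
  | comp cf cg ihf ihg =>
      intro n v hv
      simp only [evalo] at hv ⊢
      obtain ⟨a, ha, hb⟩ := Part.mem_bind_iff.1 hv
      obtain ⟨b₁, h₁⟩ := ihg _ _ ha
      obtain ⟨b₂, h₂⟩ := ihf _ _ hb
      exact ⟨max b₁ b₂, Part.mem_bind_iff.2 ⟨a, evalo_Ob_le hmono (le_max_left _ _) _ _ _ h₁,
        evalo_Ob_le hmono (le_max_right _ _) _ _ _ h₂⟩⟩
  | prec cf cg ihf ihg =>
      intro n v
      have hrec : ∀ (b : ℕ) (a m i : ℕ),
          i ∈ (Nat.rec (motive := fun _ => Part ℕ) (evalo (Ob b) cf a)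
            (fun y IH => IH >>= fun i => evalo (Ob b) cg (Nat.pair a (Nat.pair y i))) m) →
          ∀ b', b ≤ b' →
          i ∈ (Nat.rec (motive := fun _ => Part ℕ) (evalo (Ob b') cf a)
            (fun y IH => IH >>= fun i => evalo (Ob b') cg (Nat.pair a (Nat.pair y i))) m) := by
        intro b a m i hi b' hbb
        have := evalo_Ob_le hmono hbb (.prec cf cg) (Nat.pair a m) i
        simpa [evalo, Nat.unpaired, Nat.unpair_pair] using this
          (by simpa [evalo, Nat.unpaired, Nat.unpair_pair] using hi)
      simp only [evalo, Nat.unpaired]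
      generalize n.unpair.1 = a
      generalize n.unpair.2 = m
      induction m generalizing v with
      | zero => exact fun hv => ihf _ _ hv
      | succ y ih =>
          intro hv
          simp only [Part.bind_eq_bind, Part.mem_bind_iff] at hv ⊢
          obtain ⟨i, hi, hv⟩ := hv
          obtain ⟨b₁, h₁⟩ := ih _ hi
          obtain ⟨b₂, h₂⟩ := ihg _ _ hv
          exact ⟨max b₁ b₂, i, hrec _ _ _ _ h₁ _ (le_max_left _ _),
            evalo_Ob_le hmono (le_max_right _ _) _ _ _ h₂⟩
  | rfind' cf ihf =>
      intro n v hv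
      simp only [evalo, Nat.unpaired, Part.map_eq_map, Part.mem_map_iff] at hv ⊢
      obtain ⟨m, hm, rfl⟩ := hv
      obtain ⟨h0, hlt⟩ := Nat.mem_rfind.1 hm
      -- uniform bound for all j < m
      have haux : ∀ M, (∀ j < M, (false : Bool) ∈ (fun x => decide (x = 0)) <$>
            evalo O cf (Nat.pair n.unpair.1 (j + n.unpair.2))) →
          ∃ b, ∀ j < M, (false : Bool) ∈ (fun x => decide (x = 0)) <$>
            evalo (Ob b) cf (Nat.pair n.unpair.1 (j + n.unpair.2)) := by
        intro M
        induction M with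
        | zero => exact fun _ => ⟨0, by omega⟩
        | succ M ihM =>
            intro hM
            obtain ⟨b₁, h₁⟩ := ihM fun j hj => hM j (by omega)
            have hMm := hM M (by omega)
            simp only [Part.map_eq_map, Part.mem_map_iff] at hMm
            obtain ⟨a, ha, ha'⟩ := hMm
            obtain ⟨b₂, h₂⟩ := ihf _ _ ha
            refine ⟨max b₁ b₂, fun j hj => ?_⟩
            rcases Nat.lt_succ_iff_lt_or_eq.1 hj with hj | rfl
            · have := h₁ j hj
              simp only [Part.map_eq_map, Part.mem_map_iff] at this ⊢
              obtain ⟨a', ha1, ha2⟩ := this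
              exact ⟨a', evalo_Ob_le hmono (le_max_left _ _) _ _ _ ha1, ha2⟩
            · simp only [Part.map_eq_map, Part.mem_map_iff]
              exact ⟨a, evalo_Ob_le hmono (le_max_right _ _) _ _ _ h₂, ha'⟩
      obtain ⟨b₁, h₁⟩ := haux m fun j hj => hlt hj
      simp only [Part.map_eq_map, Part.mem_map_iff] at h0
      obtain ⟨a, ha, ha'⟩ := h0
      obtain ⟨b₂, h₂⟩ := ihf _ _ ha
      refine ⟨max b₁ b₂, m, ?_, rfl⟩
      refine Nat.mem_rfind.2 ⟨?_, ?_⟩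
      · simp only [Part.map_eq_map, Part.mem_map_iff]
        exact ⟨a, evalo_Ob_le hmono (le_max_right _ _) _ _ _ h₂, ha'⟩
      · intro j hj
        have := h₁ j hj
        simp only [Part.map_eq_map, Part.mem_map_iff] at this ⊢
        obtain ⟨a', ha1, ha2⟩ := this
        exact ⟨a', evalo_Ob_le hmono (le_max_left _ _) _ _ _ ha1, ha2⟩

end Compact

/-! ### Finite oracle tables -/

theorem RecursiveIn.prec {O f g : ℕ →. ℕ} (hf : RecursiveIn O f) (hg : RecursiveIn O g) :
    RecursiveIn O (Nat.unpaired fun a n =>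
      n.rec (f a) fun y IH => IH >>= fun i => g (Nat.pair a (Nat.pair y i))) := by
  obtain ⟨cf, rfl⟩ := hf; obtain ⟨cg, rfl⟩ := hg
  exact ⟨.prec cf cg, rfl⟩

/-- The characteristic function of a set, as a total function. -/
noncomputable def chiF (S : Set ℕ) : ℕ → ℕ := S.indicator fun _ => 1

theorem chi_eq (S : Set ℕ) : chi S = fun n => Part.some (chiF S n) := rfl

/-- The table of oracle answers `[χ_S 0, …, χ_S b]`, encoded as a natural number. -/
noncomputable def tbl (S : Set ℕ) (b : ℕ) : ℕ :=
  Encodable.encode ((List.range (b + 1)).map (chiF S))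

/-- The finite partial oracle described by an encoded table `t`. -/
def tableOracle (t : ℕ) : ℕ →. ℕ := fun x =>
  Part.ofOption (((Encodable.decode (α := List ℕ) t).getD [])[x]?)

theorem tableOracle_tbl (S : Set ℕ) (b x : ℕ) :
    tableOracle (tbl S b) x = if x ≤ b then Part.some (chiF S x) else Part.none := by
  simp only [tableOracle, tbl, Encodable.encodek, Option.getD_some]
  rcases le_or_gt x b with h | h
  · rw [List.getElem?_map, List.getElem?_range (by omega : x < b + 1)]
    simp [h]
  · rw [List.getElem?_eq_none (by simpa using by omega)]
    simp [Nat.not_le.2 h]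

theorem tableOracle_mono (S : Set ℕ) (b x v : ℕ) (hv : v ∈ tableOracle (tbl S b) x) :
    v ∈ tableOracle (tbl S (b + 1)) x := by
  rw [tableOracle_tbl] at hv ⊢
  split at hv
  · rw [if_pos (by omega)]; exact hv
  · simp at hv

theorem tableOracle_cov (S : Set ℕ) (x v : ℕ) (hv : v ∈ chi S x) :
    ∃ b, v ∈ tableOracle (tbl S b) x := by
  refine ⟨x, ?_⟩
  rw [tableOracle_tbl, if_pos le_rfl]
  simpa [chi, chiF] using hv

theorem tableOracle_sub (S : Set ℕ) (b x v : ℕ) (hv : v ∈ tableOracle (tbl S b) x) :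
    v ∈ chi S x := by
  rw [tableOracle_tbl] at hv
  split at hv
  · simpa [chi, chiF] using hv
  · simp at hv

/-- Appending one answer to an encoded table. -/
def tblStep (t w : ℕ) : ℕ :=
  Encodable.encode (((Encodable.decode (α := List ℕ) t).getD []) ++ [w])

theorem computable_tblStep : Computable₂ tblStep := by
  have h : Primrec fun p : ℕ × ℕ =>
      Encodable.encode (((Encodable.decode (α := List ℕ) p.1).getD []) ++ [p.2]) :=
    Primrec.encode.comp (Primrec.list_append.comp
      (Primrec.option_getD.comp (Primrec.decode.comp .fst) (.const []))
      (Primrec.list_cons.comp .snd (.const [])))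
  exact h.to_comp

theorem tblStep_tbl (S : Set ℕ) (b : ℕ) : tblStep (tbl S b) (chiF S (b + 1)) = tbl S (b + 1) := by
  simp only [tblStep, tbl, Encodable.encodek, Option.getD_some]
  rw [List.range_succ (n := b + 1)]
  simp

/-- Auxiliary recursion computing tables. -/
noncomputable def tblAux (S : Set ℕ) : ℕ → Part ℕ := fun n =>
  Nat.rec (Part.some (tbl S 0))
    (fun y IH => IH >>= fun i => (chi S (y + 1)).bind fun w => Part.some (tblStep i w)) n

theorem tblAux_eq (S : Set ℕ) : ∀ n, tblAux S n = Part.some (tbl S n) := by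
  intro n
  induction n with
  | zero => rfl
  | succ y ih =>
      show (tblAux S y) >>= _ = _
      rw [ih]
      simp [chi_eq, tblStep_tbl]

/-- The table function is computable in the oracle. -/
theorem recursiveIn_tbl (S : Set ℕ) : RecursiveIn (chi S) fun n => Part.some (tbl S n) := by
  have hstep : RecursiveIn (chi S) fun m =>
      (chi S (m.unpair.2.unpair.1 + 1)).bind fun w =>
        Part.some (tblStep m.unpair.2.unpair.2 w) := by
    have h₁ : RecursiveIn (chi S) fun m => Nat.pair <$> Part.some m.unpair.2.unpair.2 <*>
        chi S (m.unpair.2.unpair.1 + 1) :=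
      (RecursiveIn.of_computable ((Computable.snd.comp Computable.unpair).comp
          (Computable.snd.comp Computable.unpair))).pair
        (RecursiveIn.oracle.comp_computable (Computable.succ.comp
          ((Computable.fst.comp Computable.unpair).comp (Computable.snd.comp Computable.unpair))))
    have h₂ : RecursiveIn (chi S) fun p =>
        Part.some (tblStep p.unpair.1 p.unpair.2) :=
      RecursiveIn.of_computable (computable_tblStep.comp
        (Computable.fst.comp Computable.unpair) (Computable.snd.comp Computable.unpair))
    refine (h₂.comp h₁).of_eq fun m => ?_
    simp [chi_eq, Seq.seq]
  have hbase : RecursiveIn (chi S) fun _ : ℕ => Part.some (tbl S 0) :=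
    RecursiveIn.of_computable (Computable.const _)
  have hprec := hbase.prec hstep
  have hmain := hprec.comp_computable (g := fun n => Nat.pair 0 n)
    ((Primrec₂.natPair.comp (Primrec.const 0) Primrec.id).to_comp)
  refine hmain.of_eq fun n => ?_
  have : (Nat.unpaired fun a n =>
      Nat.rec (Part.some (tbl S 0))
        (fun y IH => IH >>= fun i =>
          (chi S ((Nat.pair a (Nat.pair y i)).unpair.2.unpair.1 + 1)).bind fun w =>
            Part.some (tblStep (Nat.pair a (Nat.pair y i)).unpair.2.unpair.2 w)) n)
      (Nat.pair 0 n) = tblAux S n := by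
    simp only [Nat.unpaired, Nat.unpair_pair, tblAux]
  rw [this, tblAux_eq]

/-! ### Mathlib codes for table oracles -/

theorem exists_clookup : ∃ c : Code, c.eval = fun m => tableOracle m.unpair.1 m.unpair.2 := by
  apply exists_code.1
  apply Partrec.nat_iff.1
  have h : Computable fun m : ℕ =>
      ((Encodable.decode (α := List ℕ) m.unpair.1).getD [])[m.unpair.2]? :=
    (Primrec.list_getElem?.comp
      (Primrec.option_getD.comp (Primrec.decode.comp (Primrec.fst.comp Primrec.unpair))
        (Primrec.const []))
      (Primrec.snd.comp Primrec.unpair)).to_comp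
  exact h.ofOption

/-- A fixed Mathlib code for the table lookup function. -/
noncomputable def clookup : Code := exists_clookup.choose

theorem clookup_eval : clookup.eval = fun m => tableOracle m.unpair.1 m.unpair.2 :=
  exists_clookup.choose_spec

/-- The Mathlib code simulating the `OCode` `c` with finite oracle table `t`. -/
noncomputable def codeWith (c : OCode) (t : ℕ) : Code := toCode c (clookup.curry t)

theorem eval_codeWith (c : OCode) (t : ℕ) :
    (codeWith c t).eval = evalo (tableOracle t) c := by
  rw [codeWith, eval_toCode]
  have h : (clookup.curry t).eval = tableOracle t := funext fun x => by
    rw [eval_curry, clookup_eval]; simp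
  rw [h]

theorem primrec_codeWith (c : OCode) : Primrec fun t => codeWith c t := by
  unfold codeWith
  induction c with
  | zero => exact Primrec.const _
  | succ => exact Primrec.const _
  | left => exact Primrec.const _
  | right => exact Primrec.const _
  | oracle => exact primrec₂_curry.comp (Primrec.const clookup) Primrec.id
  | pair a b iha ihb => exact primrec₂_pair.comp iha ihb
  | comp a b iha ihb => exact primrec₂_comp.comp iha ihb
  | prec a b iha ihb => exact primrec₂_prec.comp iha ihb
  | rfind' a iha => exact primrec_rfind'.comp iha

/-- Bounded halting check: does `c` with table `t` and fuel `a` halt on `n`? -/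
noncomputable def haltCheck (c : OCode) (n a t : ℕ) : ℕ :=
  if (Nat.Partrec.Code.evaln a (codeWith c t) n).isSome then 1 else 0

theorem primrec_haltCheck (c : OCode) :
    Primrec fun p : ℕ × ℕ => haltCheck c p.1.unpair.1 p.1.unpair.2.unpair.1 p.2 := by
  unfold haltCheck
  apply Primrec.ite _ (Primrec.const 1) (Primrec.const 0)
  apply PrimrecPred.comp (p := fun o : Option ℕ => o.isSome = true)
  · exact Primrec.eq.comp Primrec.option_isSome (Primrec.const true)
  · exact primrec_evaln.comp <|
      ((Primrec.fst.comp (Primrec.unpair.comp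
          (Primrec.snd.comp (Primrec.unpair.comp Primrec.fst)))).pair
        ((primrec_codeWith c).comp Primrec.snd)).pair
        (Primrec.fst.comp (Primrec.unpair.comp Primrec.fst))

theorem haltCheck_sound {Z : Set ℕ} {c : OCode} {n a t : ℕ} (h : haltCheck c n a (tbl Z t) = 1) :
    (evalo (chi Z) c n).Dom := by
  unfold haltCheck at h
  split at h
  · next hs =>
      obtain ⟨v, hv⟩ := Option.isSome_iff_exists.1 hs
      have hev : v ∈ (codeWith c (tbl Z t)).eval n := evaln_sound hv
      rw [eval_codeWith] at hev
      have := evalo_mono (fun x v hv => tableOracle_sub Z t x v hv) c n v hev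
      exact Part.dom_iff_mem.2 ⟨v, this⟩
  · omega

theorem haltCheck_complete {Z : Set ℕ} {c : OCode} {n : ℕ} (h : (evalo (chi Z) c n).Dom) :
    ∃ a t, haltCheck c n a (tbl Z t) = 1 := by
  obtain ⟨v, hv⟩ := Part.dom_iff_mem.1 h
  obtain ⟨t, ht⟩ := evalo_compact (Ob := fun b => tableOracle (tbl Z b))
    (tableOracle_mono Z) (tableOracle_cov Z) c n v hv
  rw [← eval_codeWith] at ht
  obtain ⟨a, ha⟩ := evaln_complete.1 ht
  refine ⟨a, t, ?_⟩
  unfold haltCheck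
  rw [if_pos (Option.isSome_iff_exists.2 ⟨v, ha⟩)]

/-! ### Minimization -/

theorem RecursiveIn.rfind {O f : ℕ →. ℕ} (hf : RecursiveIn O f) :
    RecursiveIn O fun a => Nat.rfind fun n => (fun m => m = 0) <$> f (Nat.pair a n) := by
  obtain ⟨cf, rfl⟩ := hf
  refine ⟨.comp (.rfind' cf) (.pair (.pair .left .right) .zero), ?_⟩
  funext a
  simp [evalo, Seq.seq, pure, PFun.pure, Part.map_id']

/-! ### Relativized Post argument -/

theorem haltCheck_le_one (c : OCode) (n a t : ℕ) : haltCheck c n a t ≤ 1 := by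
  unfold haltCheck
  split <;> omega

theorem turingLE_of_ce_co_ce {X Z : Set ℕ} {cP cQ : OCode}
    (hP : ∀ n, n ∈ X ↔ (evalo (chi Z) cP n).Dom)
    (hQ : ∀ n, n ∉ X ↔ (evalo (chi Z) cQ n).Dom) : TuringLE X Z := by
  classical
  set gfn : ℕ → ℕ := fun m =>
    haltCheck cP m.unpair.1 m.unpair.2.unpair.1 (tbl Z m.unpair.2.unpair.2) +
      2 * haltCheck cQ m.unpair.1 m.unpair.2.unpair.1 (tbl Z m.unpair.2.unpair.2) with hgfn
  have hGrec : RecursiveIn (chi Z) fun m => Part.some (gfn m) := by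
    have hpre : RecursiveIn (chi Z) fun m =>
        Nat.pair <$> Part.some m <*> Part.some (tbl Z m.unpair.2.unpair.2) :=
      (RecursiveIn.of_computable Computable.id).pair
        ((recursiveIn_tbl Z).comp_computable
          ((Computable.snd.comp Computable.unpair).comp
            (Computable.snd.comp Computable.unpair)))
    have hpure : ∀ c : OCode, Primrec fun p : ℕ =>
        haltCheck c p.unpair.1.unpair.1 p.unpair.1.unpair.2.unpair.1 p.unpair.2 := fun c =>
      (primrec_haltCheck c).comp
        ((Primrec.fst.comp Primrec.unpair).pair (Primrec.snd.comp Primrec.unpair))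
    have hpost : RecursiveIn (chi Z) fun p : ℕ =>
        Part.some (haltCheck cP p.unpair.1.unpair.1 p.unpair.1.unpair.2.unpair.1 p.unpair.2 +
          2 * haltCheck cQ p.unpair.1.unpair.1 p.unpair.1.unpair.2.unpair.1 p.unpair.2) :=
      RecursiveIn.of_computable
        ((Primrec.nat_add.comp (hpure cP)
          (Primrec.nat_mul.comp (Primrec.const 2) (hpure cQ))).to_comp)
    refine (hpost.comp hpre).of_eq fun m => ?_
    simp [Seq.seq, Nat.unpair_pair]; rfl
  have hmod : RecursiveIn (chi Z) fun p => Part.some (gfn p % 2) :=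
    (hGrec.map_computable ((Primrec.nat_mod.comp Primrec.id (Primrec.const 2)).to_comp)).of_eq
      fun p => by simp
  have hsgn : RecursiveIn (chi Z) fun m => Part.some (if gfn m = 0 then 1 else 0) :=
    (hGrec.map_computable
      ((Primrec.ite (Primrec.eq.comp Primrec.id (Primrec.const 0)) (Primrec.const 1)
        (Primrec.const 0)).to_comp)).of_eq fun m => by simp
  have hsrch : RecursiveIn (chi Z) fun n =>
      Nat.rfind fun k => (fun m => m = 0) <$>
        ((fun m => Part.some (if gfn m = 0 then 1 else 0)) (Nat.pair n k)) := hsgn.rfind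
  have hfinal : RecursiveIn (chi Z) fun n =>
      (Nat.pair <$> Part.some n <*>
        (Nat.rfind fun k => (fun m => m = 0) <$>
          ((fun m => Part.some (if gfn m = 0 then 1 else 0)) (Nat.pair n k)))) >>= fun p =>
        Part.some (gfn p % 2) :=
    hmod.comp ((RecursiveIn.of_computable Computable.id).pair hsrch)
  refine hfinal.of_eq fun n => ?_
  -- correctness
  have hexists : ∃ k, gfn (Nat.pair n k) ≠ 0 := by
    by_cases hx : n ∈ X
    · obtain ⟨a, b, hab⟩ := haltCheck_complete (hP n |>.1 hx)
      exact ⟨Nat.pair a b, by simp [hgfn, Nat.unpair_pair, hab]⟩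
    · obtain ⟨a, b, hab⟩ := haltCheck_complete (hQ n |>.1 hx)
      exact ⟨Nat.pair a b, by simp [hgfn, Nat.unpair_pair, hab]⟩
  set k₀ := Nat.find hexists with hk₀
  have hk₀ne : gfn (Nat.pair n k₀) ≠ 0 := Nat.find_spec hexists
  have hk₀min : ∀ m < k₀, gfn (Nat.pair n m) = 0 := fun m hm => by
    have := Nat.find_min hexists hm; simpa using this
  have hrmem : k₀ ∈ Nat.rfind fun k => (fun m => m = 0) <$>
      ((fun m => Part.some (if gfn m = 0 then 1 else 0)) (Nat.pair n k)) := by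
    refine Nat.mem_rfind.2 ⟨?_, ?_⟩
    · simp only [Part.map_eq_map, Part.mem_map_iff, Part.mem_some_iff]
      exact ⟨_, rfl, by simp [hk₀ne]⟩
    · intro m hm
      simp only [Part.map_eq_map, Part.mem_map_iff, Part.mem_some_iff]
      exact ⟨_, rfl, by simp [hk₀min m hm]⟩
  have hbind : ((Nat.pair <$> Part.some n <*>
      (Nat.rfind fun k => (fun m => m = 0) <$>
        ((fun m => Part.some (if gfn m = 0 then 1 else 0)) (Nat.pair n k)))) >>= fun p =>
      Part.some (gfn p % 2)) = Part.some (gfn (Nat.pair n k₀) % 2) := by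
    apply Part.eq_some_iff.2
    simp only [Part.bind_eq_bind, Part.mem_bind_iff, Seq.seq, Part.map_eq_map,
      Part.mem_map_iff, Part.mem_some_iff]
    exact ⟨Nat.pair n k₀, ⟨_, ⟨n, rfl, rfl⟩, k₀, hrmem, rfl⟩, rfl⟩
  rw [hbind, chi_eq]
  congr 1
  by_cases hx : n ∈ X
  · -- cQ never halts on n
    have hq0 : ∀ a t, haltCheck cQ n a (tbl Z t) = 0 := by
      intro a t
      by_contra h
      have h1 : haltCheck cQ n a (tbl Z t) = 1 := by
        have := haltCheck_le_one cQ n a (tbl Z t); omega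
      exact (hQ n).2 (haltCheck_sound h1) hx
    have : gfn (Nat.pair n k₀) = haltCheck cP n (Nat.pair n k₀).unpair.2.unpair.1
        (tbl Z (Nat.pair n k₀).unpair.2.unpair.2) := by
      simp [hgfn, Nat.unpair_pair, hq0]
    have h1 : gfn (Nat.pair n k₀) = 1 := by
      have := haltCheck_le_one cP n (Nat.pair n k₀).unpair.2.unpair.1
        (tbl Z (Nat.pair n k₀).unpair.2.unpair.2)
      omega
    simp [h1, chiF, hx]
  · have hp0 : ∀ a t, haltCheck cP n a (tbl Z t) = 0 := by
      intro a t
      by_contra h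
      have h1 : haltCheck cP n a (tbl Z t) = 1 := by
        have := haltCheck_le_one cP n a (tbl Z t); omega
      exact hx (hP n |>.2 (haltCheck_sound h1))
    have : gfn (Nat.pair n k₀) = 2 * haltCheck cQ n (Nat.pair n k₀).unpair.2.unpair.1
        (tbl Z (Nat.pair n k₀).unpair.2.unpair.2) := by
      simp [hgfn, Nat.unpair_pair, hp0]
    have h2 : gfn (Nat.pair n k₀) = 2 := by
      have := haltCheck_le_one cQ n (Nat.pair n k₀).unpair.2.unpair.1
        (tbl Z (Nat.pair n k₀).unpair.2.unpair.2)
      omega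
    simp [h2, chiF, hx]

/-! ### Numerals and indices in `K₁^X` -/

/-- An `OCode` computing the constant function `n`. -/
def ocConst : ℕ → OCode
  | 0 => .zero
  | n + 1 => .comp .succ (ocConst n)

theorem evalo_ocConst (O : ℕ →. ℕ) : ∀ n m : ℕ, evalo O (ocConst n) m = Part.some n := by
  intro n
  induction n with
  | zero => intro m; rfl
  | succ n ih =>
      intro m
      show evalo O (ocConst n) m >>= _ = _
      rw [ih m]
      simp [evalo]

theorem ofNat_one : OCode.ofNat 1 = .succ := by simp [OCode.ofNat]

/-- `tAux n = OCode.toNat (ocConst n)`, in explicitly primitive recursive form. -/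
def tAux : ℕ → ℕ := Nat.rec 0 fun _ ih => 4 * Nat.pair 1 ih + 6

theorem tAux_eq : ∀ n, tAux n = OCode.toNat (ocConst n) := by
  intro n
  induction n with
  | zero => rfl
  | succ n ih => show 4 * Nat.pair 1 (tAux n) + 6 = _; rw [ih]; rfl

/-- The index of the oracle-query code `λ_. χ_X(n)`. -/
def eIdx (n : ℕ) : ℕ := OCode.toNat (.comp .oracle (ocConst n))

theorem eIdx_eq (n : ℕ) : eIdx n = 4 * Nat.pair 4 (tAux n) + 6 := by
  rw [tAux_eq]; rfl

theorem primrec_eIdx : Primrec eIdx := by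
  have h : Primrec tAux :=
    Primrec.nat_rec₁ 0 ((Primrec.nat_add.comp
      (Primrec.nat_mul.comp (Primrec.const 4)
        (Primrec₂.natPair.comp (Primrec.const 1) Primrec.snd))
      (Primrec.const 6)).to₂)
  have : Primrec fun n => 4 * Nat.pair 4 (tAux n) + 6 :=
    Primrec.nat_add.comp
      (Primrec.nat_mul.comp (Primrec.const 4) (Primrec₂.natPair.comp (Primrec.const 4) h))
      (Primrec.const 6)
  exact this.of_eq fun n => (eIdx_eq n).symm

theorem phi_toNat (O : ℕ →. ℕ) (c : OCode) : phi O (OCode.toNat c) = evalo O c := by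
  unfold phi
  rw [OCode.ofNat_toNat]

theorem k1_succ (X : Set ℕ) (m : ℕ) : k1App X 1 m = Part.some (m + 1) := by
  unfold k1App phi
  rw [ofNat_one]
  rfl

theorem k1_eIdx (X : Set ℕ) (n m : ℕ) : k1App X (eIdx n) m = Part.some (chiF X n) := by
  unfold k1App
  rw [eIdx, phi_toNat]
  show evalo (chi X) (ocConst n) m >>= chi X = _
  rw [evalo_ocConst]
  simp [chi_eq]

theorem chiF_eq_mem (X : Set ℕ) (n : ℕ) (h : n ∈ X) : chiF X n = 1 := by
  simp [chiF, h]

theorem chiF_eq_not_mem (X : Set ℕ) (n : ℕ) (h : n ∉ X) : chiF X n = 0 := by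
  simp [chiF, h]

/-! ### Codes for the numbering recursion -/

theorem evalo_comp_eq (O : ℕ →. ℕ) (A B : OCode) (n : ℕ) :
    evalo O (.comp A B) n = evalo O B n >>= evalo O A := rfl

theorem evalo_pair_eq (O : ℕ →. ℕ) (A B : OCode) (n : ℕ) :
    evalo O (.pair A B) n = Nat.pair <$> evalo O A n <*> evalo O B n := rfl

theorem seq_some (a b : ℕ) :
    (Nat.pair <$> (Part.some a) <*> (Part.some b) : Part ℕ) = Part.some (Nat.pair a b) := by
  simp [Seq.seq]

/-- The code computing γ-codes of `f n` by recursion on `n`. -/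
def ccC (cψ : OCode) (n0 n1 : ℕ) : OCode :=
  .comp (.prec (ocConst n0) (.comp cψ (.pair (ocConst n1) (.comp .right .right))))
    (.pair .zero (.pair .left .right))

theorem evalo_ccC_red (O : ℕ →. ℕ) (cψ : OCode) (n0 n1 n : ℕ) :
    evalo O (ccC cψ n0 n1) n =
      evalo O (.prec (ocConst n0) (.comp cψ (.pair (ocConst n1) (.comp .right .right))))
        (Nat.pair 0 n) := by
  rw [ccC, evalo_comp_eq, evalo_pair_eq]
  have hid : evalo O (.pair OCode.left OCode.right) n = Part.some n := by
    rw [evalo_pair_eq]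
    show Nat.pair <$> Part.some n.unpair.1 <*> Part.some n.unpair.2 = _
    rw [seq_some, Nat.pair_unpair]
  rw [hid]
  show Nat.pair <$> Part.some 0 <*> Part.some n >>= _ = _
  rw [seq_some]
  simp

theorem evalo_ccC_zero (O : ℕ →. ℕ) (cψ : OCode) (n0 n1 : ℕ) :
    evalo O (ccC cψ n0 n1) 0 = Part.some n0 := by
  rw [evalo_ccC_red]
  simp only [evalo, Nat.unpaired, Nat.unpair_pair, Nat.rec_zero]
  rw [evalo_ocConst]

theorem evalo_ccC_succ {O ψ : ℕ →. ℕ} {cψ : OCode} (hcψ : evalo O cψ = ψ) (n0 n1 n : ℕ) :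
    evalo O (ccC cψ n0 n1) (n + 1) =
      evalo O (ccC cψ n0 n1) n >>= fun i => ψ (Nat.pair n1 i) := by
  rw [evalo_ccC_red, evalo_ccC_red]
  simp only [evalo, Nat.unpaired, Nat.unpair_pair, Nat.rec_add_one]
  congr 1
  funext i
  rw [evalo_ocConst]
  simp [Seq.seq, Nat.unpair_pair, hcψ, PFun.coe_val]

/-! ### The main theorem -/

theorem stmt2 (X Y : Set ℕ) (α : Type*) (app : α → α → Part α) (hpca : IsPCA app)
    (γ : ℕ →. α) (hγ : IsNumbering γ) (heff : EffValued Y app γ)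
    (hineq : CEInequiv Y γ)
    (f : ℕ → α) (hf : IsPCAEmbedding (k1App X) app f) : TuringLE X Y := by
  classical
  obtain ⟨hfinj, hfapp⟩ := hf
  obtain ⟨ψ, ⟨cψ, hcψ⟩, hψ⟩ := heff
  obtain ⟨R, ⟨cR, hcR⟩, hR⟩ := hineq
  obtain ⟨n0, hn0⟩ := hγ (f 0)
  obtain ⟨n1, hn1⟩ := hγ (f 1)
  -- an index for the function `eIdx` in `K₁^X`
  obtain ⟨cg, hcg⟩ := RecursiveIn.of_computable (O := chi X)
    (f := eIdx) primrec_eIdx.to_comp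
  obtain ⟨ng, hng⟩ := hγ (f (OCode.toNat cg))
  have hgapp : ∀ n, eIdx n ∈ k1App X (OCode.toNat cg) n := fun n => by
    unfold k1App
    rw [phi_toNat, hcg]
    exact Part.mem_some _
  -- γ-codes for the numerals `f n`
  have hC : ∀ n, ∃ j, evalo (chi Y) (ccC cψ n0 n1) n = Part.some j ∧ f n ∈ γ j := by
    intro n
    induction n with
    | zero => exact ⟨n0, evalo_ccC_zero _ _ _ _, hn0⟩
    | succ n ih =>
        obtain ⟨j, hj, hγj⟩ := ih
        have happ : f (n + 1) ∈ app (f 1) (f n) :=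
          hfapp 1 n (n + 1) (by rw [k1_succ]; exact Part.mem_some _)
        obtain ⟨j', hj'ψ, hγj'⟩ := hψ n1 j (f 1) (f n) (f (n + 1)) hn1 hγj happ
        refine ⟨j', ?_, hγj'⟩
        rw [evalo_ccC_succ hcψ, hj, Part.bind_eq_bind, Part.bind_some]
        exact Part.eq_some_iff.2 hj'ψ
  -- γ-codes for `f (χ_X n)`
  have hrC : ∀ n, ∃ j,
      evalo (chi Y) (.comp cψ (.pair (.comp cψ (.pair (ocConst ng) (ccC cψ n0 n1)))
        (ocConst n0))) n = Part.some j ∧ f (chiF X n) ∈ γ j := by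
    intro n
    obtain ⟨j, hj, hγj⟩ := hC n
    have h1 : f (eIdx n) ∈ app (f (OCode.toNat cg)) (f n) :=
      hfapp (OCode.toNat cg) n (eIdx n) (hgapp n)
    obtain ⟨j₁, hj₁ψ, hγj₁⟩ := hψ ng j (f (OCode.toNat cg)) (f n) (f (eIdx n)) hng hγj h1
    have h2 : f (chiF X n) ∈ app (f (eIdx n)) (f 0) :=
      hfapp (eIdx n) 0 (chiF X n) (by rw [k1_eIdx]; exact Part.mem_some _)
    obtain ⟨j₂, hj₂ψ, hγj₂⟩ := hψ j₁ n0 (f (eIdx n)) (f 0) (f (chiF X n)) hγj₁ hn0 h2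
    refine ⟨j₂, ?_, hγj₂⟩
    rw [evalo_comp_eq, evalo_pair_eq, evalo_comp_eq, evalo_pair_eq, evalo_ocConst,
      evalo_ocConst, hj, seq_some]
    have hstep1 : Part.some (Nat.pair ng j) >>= evalo (chi Y) cψ = Part.some j₁ := by
      rw [hcψ]
      simpa using Part.eq_some_iff.2 hj₁ψ
    rw [hstep1, seq_some]
    rw [hcψ]
    simpa using Part.eq_some_iff.2 hj₂ψ
  -- the two semi-decision codes
  have key : ∀ (nc : ℕ) (v : α), v ∈ γ nc → ∀ n,
      ((evalo (chi Y) (.comp cR (.pair (.comp cψ (.pair (.comp cψ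
          (.pair (ocConst ng) (ccC cψ n0 n1))) (ocConst n0))) (ocConst nc))) n).Dom ↔
        f (chiF X n) ≠ v) := by
    intro nc v hv n
    obtain ⟨j₂, hj₂, hγj₂⟩ := hrC n
    rw [evalo_comp_eq, evalo_pair_eq, hj₂, evalo_ocConst, seq_some]
    have : (Part.some (Nat.pair j₂ nc) >>= evalo (chi Y) cR) =
        evalo (chi Y) cR (Nat.pair j₂ nc) := by simp
    rw [this]
    rw [← hcR]
    rw [hR j₂ nc (Part.dom_iff_mem.2 ⟨_, hγj₂⟩) (Part.dom_iff_mem.2 ⟨_, hv⟩)]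
    rw [Part.eq_some_iff.2 hγj₂, Part.eq_some_iff.2 hv]
    constructor
    · intro h hc
      exact h (by rw [hc])
    · intro h hc
      exact h (Part.some_injective hc)
  have hP : ∀ n, n ∈ X ↔ (evalo (chi Y) (.comp cR (.pair (.comp cψ (.pair (.comp cψ
      (.pair (ocConst ng) (ccC cψ n0 n1))) (ocConst n0))) (ocConst n0))) n).Dom := by
    intro n
    rw [key n0 (f 0) hn0 n]
    constructor
    · intro hx h
      have : chiF X n = 0 := hfinj h
      rw [chiF_eq_mem X n hx] at this
      omega
    · intro h
      by_contra hx
      exact h (by rw [chiF_eq_not_mem X n hx])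
  have hQ : ∀ n, n ∉ X ↔ (evalo (chi Y) (.comp cR (.pair (.comp cψ (.pair (.comp cψ
      (.pair (ocConst ng) (ccC cψ n0 n1))) (ocConst n0))) (ocConst n1))) n).Dom := by
    intro n
    rw [key n1 (f 1) hn1 n]
    constructor
    · intro hx h
      have : chiF X n = 1 := hfinj h
      rw [chiF_eq_not_mem X n hx] at this
      omega
    · intro h
      by_contra hx
      exact h (by rw [chiF_eq_mem X n hx])
  exact turingLE_of_ce_co_ce hP hQ
end PCAEmb
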